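/- For any ψ: X → ℝ, ρ: X → ℝ₊ and any x ∈ X, δ, η ∈ G in a mapping representation, the pointwise off-diagonal estimate B(x,δ,η) + B(x,η,δ) ≥ −B(δx, δ⁻¹, δ⁻¹) − B(ηx, η⁻¹, η⁻¹) holds. -/

import Mathlib

/-!
The logarithmic mean `θ(s, t) = ∫₀¹ s^α t^(1-α) dα` is an average of weighted geometric means,
each jointly concave by weighted AM-GM, so `θ` lies below its tangent planes; by symmetry of `θ`
the second partial derivative at `(s, t)` is `∂₁θ(t, s)`. With `p = ∇_δψ(x)`, `q = ∇_ηψ(x)`,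
the tangent plane at `(ρx, ρ(δx))` evaluated at `(ρ(ηx), ρx)`, and the one at `(ρx, ρ(ηx))`
evaluated at `(ρ(δx), ρx)`, bound the difference of the two sides below by
`½ (p + q)² (θ(ρx, ρ(δx)) + θ(ρx, ρ(ηx))) ≥ 0`.
-/

noncomputable def logMean (s t : ℝ) : ℝ := ∫ a in (0:ℝ)..1, s ^ a * t ^ (1 - a)

noncomputable def d1θ (s t : ℝ) : ℝ := deriv (fun u => logMean u t) s

-- `Bpt ρ ψ y α γ` is the paper's `B(y, α, γ)`.
noncomputable def Bpt {X : Type*} (ρ ψ : X → ℝ) (y : X) (α γ : X → X) : ℝ :=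
  (1/2) * (ψ (α y) - ψ y) ^ 2 * d1θ (ρ y) (ρ (α y)) * (ρ (γ y) - ρ y)
    + (ψ (α y) - ψ y) * (ψ (γ y) - ψ y) * logMean (ρ y) (ρ (α y))

open Real Set intervalIntegral
open MeasureTheory (volume)

lemma logMean_comm (s t : ℝ) : logMean s t = logMean t s := by
  simpa [logMean, mul_comm] using
    integral_comp_sub_left (fun a => t ^ a * s ^ (1 - a)) (1:ℝ) (a := 0) (b := 1)

section
variable {s t : ℝ}

lemma logMean_nonneg (hs : 0 ≤ s) (ht : 0 ≤ t) : 0 ≤ logMean s t :=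
  integral_nonneg zero_le_one fun _ _ => by positivity

lemma hasDerivAt_logMean (hs : 0 < s) (ht : 0 < t) :
    HasDerivAt (logMean · t) (∫ a in (0:ℝ)..1, a * s ^ (a - 1) * t ^ (1 - a)) s := by
  have hK : IsCompact (Icc (s / 2) (2 * s) ×ˢ Icc (0:ℝ) 1) := isCompact_Icc.prod isCompact_Icc
  have hcont : ContinuousOn (fun p : ℝ × ℝ => p.2 * p.1 ^ (p.2 - 1) * t ^ (1 - p.2))
      (Icc (s / 2) (2 * s) ×ˢ Icc (0:ℝ) 1) := fun p hp =>
    have : p.1 ≠ 0 := by linarith [hp.1.1]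
    ((continuousAt_snd.mul (continuousAt_fst.rpow (by fun_prop) (.inl this))).mul
      (continuousAt_const.rpow (by fun_prop) (.inl ht.ne'))).continuousWithinAt
  obtain ⟨C, hC⟩ := hK.exists_bound_of_continuousOn hcont
  refine (intervalIntegral.hasDerivAt_integral_of_dominated_loc_of_deriv_le (bound := fun _ => C)
    (F := fun u a => u ^ a * t ^ (1 - a)) (F' := fun u a => a * u ^ (a - 1) * t ^ (1 - a))
    (Ioo_mem_nhds (by linarith : s / 2 < s) (by linarith : s < 2 * s)) ?_ ?_ ?_ ?_ ?_ ?_).2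
  · filter_upwards [eventually_gt_nhds hs] with u hu
    exact Continuous.aestronglyMeasurable (by fun_prop (disch := positivity))
  · exact Continuous.intervalIntegrable (by fun_prop (disch := positivity)) _ _
  · exact Continuous.aestronglyMeasurable (by fun_prop (disch := positivity))
  · refine .of_forall fun a ha u hu => hC (u, a) ⟨Ioo_subset_Icc_self hu, ?_⟩
    rw [uIoc_of_le zero_le_one] at ha
    exact Ioc_subset_Icc_self ha
  · exact intervalIntegrable_const
  · refine .of_forall fun a _ u hu => ?_
    exact (hasDerivAt_rpow_const (Or.inl (by linarith [hu.1] : u ≠ 0))).mul_const _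

lemma d1θ_eq_integral (hs : 0 < s) (ht : 0 < t) :
    d1θ s t = ∫ a in (0:ℝ)..1, a * s ^ (a - 1) * t ^ (1 - a) :=
  (hasDerivAt_logMean hs ht).deriv

lemma d1θ_eq_integral_reflect (hs : 0 < s) (ht : 0 < t) :
    d1θ t s = ∫ a in (0:ℝ)..1, (1 - a) * s ^ a * t ^ (-a) := by
  have reflect := integral_comp_sub_left (fun a => (1 - a) * s ^ a * t ^ (-a)) (1:ℝ)
    (a := 0) (b := 1)
  simp only [sub_zero, sub_self, sub_sub_cancel, neg_sub] at reflect
  rw [d1θ_eq_integral ht hs, ← reflect]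
  congr 1 with a
  ring

end

lemma rpow_mul_rpow_le_tangent {a b c d w : ℝ} (ha : 0 < a) (hb : 0 < b) (hc : 0 ≤ c)
    (hd : 0 ≤ d) (hw₀ : 0 ≤ w) (hw₁ : w ≤ 1) :
    c ^ w * d ^ (1 - w) ≤ a ^ w * b ^ (1 - w) + w * a ^ (w - 1) * b ^ (1 - w) * (c - a)
      + (1 - w) * a ^ w * b ^ (-w) * (d - b) := by
  have amgm : (c / a) ^ w * (d / b) ^ (1 - w) ≤ w * (c / a) + (1 - w) * (d / b) :=
    geom_mean_le_arith_mean2_weighted hw₀ (sub_nonneg.2 hw₁) (by positivity) (by positivity)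
      (by ring)
  calc c ^ w * d ^ (1 - w) = a ^ w * b ^ (1 - w) * ((c / a) ^ w * (d / b) ^ (1 - w)) := by
        rw [div_rpow hc ha.le, div_rpow hd hb.le]
        field_simp
    _ ≤ a ^ w * b ^ (1 - w) * (w * (c / a) + (1 - w) * (d / b)) :=
        mul_le_mul_of_nonneg_left amgm (by positivity)
    _ = _ := by
        rw [rpow_sub_one ha.ne', rpow_neg hb.le, rpow_sub hb, rpow_one]
        field_simp
        ring

lemma logMean_le_tangent {a b c d : ℝ} (ha : 0 < a) (hb : 0 < b) (hc : 0 < c) (hd : 0 < d) :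
    logMean c d ≤ logMean a b + d1θ a b * (c - a) + d1θ b a * (d - b) := by
  have int_value : IntervalIntegrable (fun w : ℝ => a ^ w * b ^ (1 - w)) volume 0 1 :=
    Continuous.intervalIntegrable (by fun_prop (disch := positivity)) _ _
  have int_d₁ : IntervalIntegrable (fun w : ℝ => w * a ^ (w - 1) * b ^ (1 - w) * (c - a))
      volume 0 1 := Continuous.intervalIntegrable (by fun_prop (disch := positivity)) _ _
  have int_d₂ : IntervalIntegrable (fun w : ℝ => (1 - w) * a ^ w * b ^ (-w) * (d - b))
      volume 0 1 := Continuous.intervalIntegrable (by fun_prop (disch := positivity)) _ _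
  have int_cd : IntervalIntegrable (fun w : ℝ => c ^ w * d ^ (1 - w)) volume 0 1 :=
    Continuous.intervalIntegrable (by fun_prop (disch := positivity)) _ _
  unfold logMean
  rw [d1θ_eq_integral ha hb, d1θ_eq_integral_reflect ha hb, ← integral_mul_const,
    ← integral_mul_const, ← integral_add int_value int_d₁,
    ← integral_add (int_value.add int_d₁) int_d₂]
  exact integral_mono_on zero_le_one int_cd ((int_value.add int_d₁).add int_d₂) fun w hw =>
    rpow_mul_rpow_le_tangent ha hb hc.le hd.le hw.1 hw.2

/-- The pointwise off-diagonal estimate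
`B(x,δ,η) + B(x,η,δ) ≥ −B(δx,δ⁻¹,δ⁻¹) − B(ηx,η⁻¹,η⁻¹)`. -/
theorem B_offdiagonal_pointwise {X : Type*} (ρ ψ : X → ℝ) (hρ : ∀ y, 0 < ρ y)
    (δ η δ' η' : X → X) (x : X)
    (hδ : δ' (δ x) = x) (hη : η' (η x) = x) :
    Bpt ρ ψ x δ η + Bpt ρ ψ x η δ
      ≥ - Bpt ρ ψ (δ x) δ' δ' - Bpt ρ ψ (η x) η' η' := by
  have ha := hρ x
  have hb := hρ (δ x)
  have hc := hρ (η x)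
  have tangent_δ := logMean_le_tangent ha hb hc ha
  have tangent_η := logMean_le_tangent ha hc hb ha
  rw [logMean_comm (ρ (η x))] at tangent_δ
  rw [logMean_comm (ρ (δ x))] at tangent_η
  have mixed : 0 ≤ ((ψ (δ x) - ψ x) + (ψ (η x) - ψ x)) ^ 2
      * (logMean (ρ x) (ρ (δ x)) + logMean (ρ x) (ρ (η x))) := by
    have := logMean_nonneg ha.le hb.le
    have := logMean_nonneg ha.le hc.le
    positivity
  simp only [Bpt, hδ, hη, ge_iff_le, logMean_comm (ρ (δ x)), logMean_comm (ρ (η x))]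
  linear_combination (1/2 * (ψ (δ x) - ψ x) ^ 2) * tangent_δ
    + (1/2 * (ψ (η x) - ψ x) ^ 2) * tangent_η + 1/2 * mixed
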